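/- arXiv:1610.09182 — 3 statements merged into one kernel-verified Lean document; each statement's English description precedes it below -/
import Mathlib

section
/- For integers 1 ≤ u ≤ n and p ∈ [0,1], with Ω_d = C(n,d) p^d (1-p)^(n-d), the probability that a slot has reduced degree 1 when u users are unresolved satisfies Σ_{d=1}^{n-u+1} Ω_d · u · C(n-u,d-1)/C(n,d) = u p (1-p)^(u-1). -/
/-! The binomial coefficient `C(n,d)` of `Ω_d` cancels against the denominator, and after
splitting off one factor `p` and `u - 1` factors `1 - p` the remaining sum over `k = d - 1` is
the binomial expansion of `(p + (1 - p))^(n-u) = 1`. -/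

open Finset

lemma choose_mul_pow_mul_div_choose {K : Type*} [Field K] [CharZero K]
    {n u k : ℕ} (hu : 1 ≤ u) (hk : k + u ≤ n) (x y : K) :
    (n.choose (k + 1) : K) * x ^ (k + 1) * y ^ (n - (k + 1)) *
        ((u : K) * ((n - u).choose k : K) / (n.choose (k + 1) : K))
      = (u : K) * x * y ^ (u - 1) * (x ^ k * y ^ (n - u - k) * ((n - u).choose k : K)) := by
  have hchoose : (n.choose (k + 1) : K) ≠ 0 := by
    exact_mod_cast (Nat.choose_pos (by omega)).ne'
  have hexp : n - (k + 1) = (n - u - k) + (u - 1) := by omega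
  rw [hexp, pow_add, pow_add, pow_one]
  field_simp

theorem reduced_degree_one_general (n u : ℕ) (hu : 1 ≤ u) (hun : u ≤ n)
    (p : ℝ) :
    ∑ d ∈ Finset.Icc 1 (n - u + 1),
      (n.choose d : ℝ) * p ^ d * (1 - p) ^ (n - d) *
        ((u : ℝ) * ((n - u).choose (d - 1) : ℝ) / (n.choose d : ℝ))
      = (u : ℝ) * p * (1 - p) ^ (u - 1) := by
  have hshift : Icc 1 (n - u + 1) = (range (n - u + 1)).map (addRightEmbedding 1) := by
    rw [range_eq_Ico, map_add_right_Ico]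
    rfl
  rw [hshift, sum_map]
  simp only [addRightEmbedding_apply, Nat.add_sub_cancel]
  have hterm : ∀ k ∈ range (n - u + 1), k + u ≤ n := fun k hk => by
    have := mem_range.mp hk
    omega
  rw [sum_congr rfl fun k hk => choose_mul_pow_mul_div_choose hu (hterm k hk) p (1 - p),
    ← mul_sum, ← add_pow, add_sub_cancel, one_pow, mul_one]

/-- With `Ω_d = C(n,d) p^d (1-p)^(n-d)`, the probability that a slot has reduced degree 1
when `u` users are unresolved satisfies
`Σ_{d=1}^{n-u+1} Ω_d · u · C(n-u,d-1)/C(n,d) = u p (1-p)^(u-1)`. -/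
theorem reduced_degree_one (n u : ℕ) (hu : 1 ≤ u) (hun : u ≤ n)
    (p : ℝ) (hp0 : 0 ≤ p) (hp1 : p ≤ 1) :
    ∑ d ∈ Finset.Icc 1 (n - u + 1),
      (n.choose d : ℝ) * p ^ d * (1 - p) ^ (n - d) *
        ((u : ℝ) * ((n - u).choose (d - 1) : ℝ) / (n.choose d : ℝ))
      = (u : ℝ) * p * (1 - p) ^ (u - 1) :=
  reduced_degree_one_general n u hu hun p
end

section
/- For integers 2 ≤ u ≤ n and p ∈ [0,1], with Ω_d = C(n,d) p^d (1-p)^(n-d), the following identity holds: Σ_{d=2}^{n-u+2} Ω_d · d(d-1) · (1/n) · ((u-1)/(n-1)) · C(n-u,d-2)/C(n-2,d-2) = (u-1) p² (1-p)^(u-2). -/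
/-!
Counting a `d`-subset together with an ordered pair inside it in two ways gives
`C(n,d)·d(d-1) = n(n-1)·C(n-2,d-2)`, so the `d`-th summand collapses to
`(u-1)·C(n-u,d-2)·p^d·(1-p)^(n-d)`. Shifting `d = k + 2`, the sum is `(u-1)p²(1-p)^(u-2)` times
the binomial expansion of `(p + (1-p))^(n-u) = 1`.
-/

open Finset

theorem Nat.cast_choose_mul_mul_sub_one {K : Type*} [Field K] [CharZero K]
    {n d : ℕ} (hd : 2 ≤ d) :
    (n.choose d : K) * (d * (d - 1)) = n * (n - 1) * (n - 2).choose (d - 2) := by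
  have h := congrArg (Nat.cast : ℕ → K) (Nat.choose_mul (n := n) hd)
  push_cast [Nat.cast_choose_two] at h
  linear_combination 2 * h

theorem sum_choose_mul_pow_mul_one_sub_pow {R : Type*} [CommRing R] (p : R) (N : ℕ) :
    ∑ k ∈ range (N + 1), (N.choose k : R) * p ^ k * (1 - p) ^ (N - k) = 1 := by
  have h := add_pow p (1 - p) N
  rw [add_sub_cancel, one_pow] at h
  exact (sum_congr rfl fun k _ => by ring).trans h.symm

theorem sum_Icc_choose_sub_mul_pow_mul_one_sub_pow {R : Type*} [CommRing R] (p : R)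
    {N a b n : ℕ} (hn : N + a + b = n) :
    ∑ d ∈ Icc a (N + a), (N.choose (d - a) : R) * p ^ d * (1 - p) ^ (n - d)
      = p ^ a * (1 - p) ^ b := by
  have hIcc : Icc a (N + a) = (range (N + 1)).map (addRightEmbedding a) := by
    rw [Nat.range_succ_eq_Icc_zero, map_add_right_Icc, zero_add]
  calc ∑ d ∈ Icc a (N + a), (N.choose (d - a) : R) * p ^ d * (1 - p) ^ (n - d)
      = ∑ k ∈ range (N + 1),
          p ^ a * (1 - p) ^ b * ((N.choose k : R) * p ^ k * (1 - p) ^ (N - k)) := by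
        rw [hIcc, sum_map]
        refine sum_congr rfl fun k hk => ?_
        have hnk : n - (k + a) = (N - k) + b := by grind
        simp only [addRightEmbedding_apply, add_tsub_cancel_right, hnk, pow_add]
        ring
    _ = p ^ a * (1 - p) ^ b := by rw [← mul_sum, sum_choose_mul_pow_mul_one_sub_pow, mul_one]

theorem qu_numerator_general (n u : ℕ) (hu : 2 ≤ u) (hun : u ≤ n)
    (p : ℝ) :
    ∑ d ∈ Finset.Icc 2 (n - u + 2),
      (n.choose d : ℝ) * p ^ d * (1 - p) ^ (n - d) *
        ((d : ℝ) * ((d : ℝ) - 1) * (1 / (n : ℝ)) * (((u : ℝ) - 1) / ((n : ℝ) - 1)) *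
          (((n - u).choose (d - 2) : ℝ) / ((n - 2).choose (d - 2) : ℝ)))
      = ((u : ℝ) - 1) * p ^ 2 * (1 - p) ^ (u - 2) := by
  have hn : (n : ℝ) ≠ 0 := by norm_cast; omega
  have hn₁ : (n : ℝ) - 1 ≠ 0 := by rw [sub_ne_zero]; norm_cast; omega
  calc _ = ∑ d ∈ Icc 2 (n - u + 2),
        ((u : ℝ) - 1) * (((n - u).choose (d - 2) : ℝ) * p ^ d * (1 - p) ^ (n - d)) := by
        refine sum_congr rfl fun d hd => ?_
        obtain ⟨hd₂, hdu⟩ := mem_Icc.mp hd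
        have hC : ((n - 2).choose (d - 2) : ℝ) ≠ 0 := by
          exact_mod_cast (Nat.choose_pos (by omega)).ne'
        have key := Nat.cast_choose_mul_mul_sub_one (K := ℝ) (n := n) hd₂
        field_simp
        linear_combination
          ((u : ℝ) - 1) * p ^ d * (1 - p) ^ (n - d) * ((n - u).choose (d - 2) : ℝ) * key
    _ = ((u : ℝ) - 1) * (p ^ 2 * (1 - p) ^ (u - 2)) := by
        rw [← mul_sum, sum_Icc_choose_sub_mul_pow_mul_one_sub_pow p (b := u - 2) (by omega)]
    _ = _ := by ring

/-- Numerator identity for the cloud-to-ripple transition probability `q_u`: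
`Σ_{d=2}^{n-u+2} Ω_d · d(d-1) · (1/n) · ((u-1)/(n-1)) · C(n-u,d-2)/C(n-2,d-2)
  = (u-1) p² (1-p)^(u-2)`, with `Ω_d = C(n,d) p^d (1-p)^(n-d)`. -/
theorem qu_numerator (n u : ℕ) (hu : 2 ≤ u) (hun : u ≤ n)
    (p : ℝ) (hp0 : 0 ≤ p) (hp1 : p ≤ 1) :
    ∑ d ∈ Finset.Icc 2 (n - u + 2),
      (n.choose d : ℝ) * p ^ d * (1 - p) ^ (n - d) *
        ((d : ℝ) * ((d : ℝ) - 1) * (1 / (n : ℝ)) * (((u : ℝ) - 1) / ((n : ℝ) - 1)) *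
          (((n - u).choose (d - 2) : ℝ) / ((n - 2).choose (d - 2) : ℝ)))
      = ((u : ℝ) - 1) * p ^ 2 * (1 - p) ^ (u - 2) :=
  qu_numerator_general n u hu hun p
end

section
/- For integers 2 ≤ u ≤ n, 0 < p < 1, the transition probability q_u defined in the finite-length analysis of frameless ALOHA admits the closed form q_u = (u-1) p² (1-p)^(u-2) / (1 − u p (1-p)^(u-1) − (1-p)^u), provided the denominator is nonzero. -/
open Finset

lemma binom_one (m : ℕ) (p : ℝ) :
    ∑ k ∈ Finset.range (m + 1), ((m.choose k : ℝ)) * p ^ k * (1 - p) ^ (m - k) = 1 := by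
  calc ∑ k ∈ Finset.range (m + 1), ((m.choose k : ℝ)) * p ^ k * (1 - p) ^ (m - k)
      = (p + (1 - p)) ^ m := by
        rw [add_pow]; exact Finset.sum_congr rfl fun k _ => by ring
    _ = 1 := by norm_num

lemma choose_mul_id (n d : ℕ) (h2 : 2 ≤ d) (hdn : d ≤ n) :
    n.choose d * d * (d - 1) = n * (n - 1) * (n - 2).choose (d - 2) := by
  obtain ⟨m, rfl⟩ : ∃ m, n = m + 2 := ⟨n - 2, by omega⟩
  obtain ⟨k, rfl⟩ : ∃ k, d = k + 2 := ⟨d - 2, by omega⟩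
  simp only [Nat.add_sub_cancel]
  have h1 : (m + 1) * m.choose k = (m + 1).choose (k + 1) * (k + 1) :=
    Nat.add_one_mul_choose_eq m k
  have h2 : (m + 2) * (m + 1).choose (k + 1) = (m + 2).choose (k + 2) * (k + 2) :=
    Nat.add_one_mul_choose_eq (m + 1) (k + 1)
  have key : (m + 2) * (m + 1) * m.choose k = (m + 2).choose (k + 2) * (k + 2) * (k + 1) := by
    calc (m + 2) * (m + 1) * m.choose k = (m + 2) * ((m + 1) * m.choose k) := by ring
      _ = (m + 2) * ((m + 1).choose (k + 1) * (k + 1)) := by rw [h1]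
      _ = ((m + 2) * (m + 1).choose (k + 1)) * (k + 1) := by ring
      _ = (m + 2).choose (k + 2) * (k + 2) * (k + 1) := by rw [h2]
  simpa [Nat.succ_sub_one] using key.symm

/-- Closed form of the transition probability `q_u` of frameless ALOHA:
with `Ω_d = C(n,d) p^d (1-p)^(n-d)`,
`q_u = (u-1) p² (1-p)^(u-2) / (1 − u p (1-p)^(u-1) − (1-p)^u)`
provided the denominator is nonzero. -/
theorem qu_closed_form (n u : ℕ) (hu : 2 ≤ u) (hun : u ≤ n)
    (p : ℝ) (hp0 : 0 < p) (hp1 : p < 1)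
    (hden : 1 - (u : ℝ) * p * (1 - p) ^ (u - 1) - (1 - p) ^ u ≠ 0) :
    (∑ d ∈ Finset.Icc 2 (n - u + 2),
        (n.choose d : ℝ) * p ^ d * (1 - p) ^ (n - d) *
          ((d : ℝ) * ((d : ℝ) - 1) * (1 / (n : ℝ)) * (((u : ℝ) - 1) / ((n : ℝ) - 1)) *
            (((n - u).choose (d - 2) : ℝ) / ((n - 2).choose (d - 2) : ℝ)))) /
      (1 - (∑ d ∈ Finset.Icc 1 (n - u + 1),
              (n.choose d : ℝ) * p ^ d * (1 - p) ^ (n - d) *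
                ((u : ℝ) * ((n - u).choose (d - 1) : ℝ) / (n.choose d : ℝ)))
         - (∑ d ∈ Finset.range (n - u + 1),
              (n.choose d : ℝ) * p ^ d * (1 - p) ^ (n - d) *
                (((n - u).choose d : ℝ) / (n.choose d : ℝ))))
    = ((u : ℝ) - 1) * p ^ 2 * (1 - p) ^ (u - 2) /
        (1 - (u : ℝ) * p * (1 - p) ^ (u - 1) - (1 - p) ^ u) := by
  have hn2 : 2 ≤ n := le_trans hu hun
  have hn0 : (n : ℝ) ≠ 0 := by positivity
  have hn1 : (n : ℝ) - 1 ≠ 0 := by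
    have h2n : (2:ℝ) ≤ (n:ℝ) := by exact_mod_cast hn2
    linarith
  -- Numerator
  have hnum : (∑ d ∈ Finset.Icc 2 (n - u + 2),
        (n.choose d : ℝ) * p ^ d * (1 - p) ^ (n - d) *
          ((d : ℝ) * ((d : ℝ) - 1) * (1 / (n : ℝ)) * (((u : ℝ) - 1) / ((n : ℝ) - 1)) *
            (((n - u).choose (d - 2) : ℝ) / ((n - 2).choose (d - 2) : ℝ))))
      = ((u : ℝ) - 1) * p ^ 2 * (1 - p) ^ (u - 2) := by
    have hcongr : ∀ d ∈ Finset.Icc 2 (n - u + 2),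
        (n.choose d : ℝ) * p ^ d * (1 - p) ^ (n - d) *
          ((d : ℝ) * ((d : ℝ) - 1) * (1 / (n : ℝ)) * (((u : ℝ) - 1) / ((n : ℝ) - 1)) *
            (((n - u).choose (d - 2) : ℝ) / ((n - 2).choose (d - 2) : ℝ)))
        = ((u : ℝ) - 1) * p ^ 2 * (1 - p) ^ (u - 2) *
            (((n - u).choose (d - 2) : ℝ) * p ^ (d - 2) * (1 - p) ^ (n - u - (d - 2))) := by
      intro d hd
      simp only [Finset.mem_Icc] at hd
      obtain ⟨hd2, hdle⟩ := hd
      have hdn : d ≤ n := by omega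
      have hkey : (n.choose d : ℝ) * (d : ℝ) * ((d : ℝ) - 1)
          = (n : ℝ) * ((n : ℝ) - 1) * ((n - 2).choose (d - 2) : ℝ) := by
        have h := congrArg (Nat.cast : ℕ → ℝ) (choose_mul_id n d hd2 hdn)
        push_cast [Nat.cast_sub (by omega : 1 ≤ d), Nat.cast_sub (by omega : 1 ≤ n)] at h
        linarith [h]
      have hCne : ((n - 2).choose (d - 2) : ℝ) ≠ 0 := by
        have hle : (d - 2) ≤ (n - 2) := by omega
        exact_mod_cast (Nat.choose_pos hle).ne'
      have hpd : p ^ d = p ^ 2 * p ^ (d - 2) := by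
        rw [← pow_add]; congr 1; omega
      have hqd : (1 - p) ^ (n - d) = (1 - p) ^ (u - 2) * (1 - p) ^ (n - u - (d - 2)) := by
        rw [← pow_add]; congr 1; omega
      rw [hpd, hqd]
      field_simp
      linear_combination ((↑u - 1) * (1 - p) ^ (u - 2) * (1 - p) ^ (n - u - (d - 2)) * (((n - u).choose (d - 2) : ℝ))) * hkey
    rw [Finset.sum_congr rfl hcongr, ← Finset.mul_sum]
    have hre : ∑ d ∈ Finset.Icc 2 (n - u + 2),
        (((n - u).choose (d - 2) : ℝ) * p ^ (d - 2) * (1 - p) ^ (n - u - (d - 2)))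
        = ∑ k ∈ Finset.range (n - u + 1),
            (((n - u).choose k : ℝ) * p ^ k * (1 - p) ^ (n - u - k)) := by
      rw [show Finset.Icc 2 (n - u + 2) = Finset.Ico 2 (n - u + 3) by
        rw [← Finset.Ico_add_one_right_eq_Icc]; rfl]
      rw [Finset.sum_Ico_eq_sum_range]
      simp only [show n - u + 3 - 2 = n - u + 1 by omega, Nat.add_sub_cancel_left,
        show ∀ k, 2 + k - 2 = k from fun k => by omega]
    rw [hre, binom_one, mul_one]
  -- Second sum
  have hsum2 : (∑ d ∈ Finset.Icc 1 (n - u + 1),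
        (n.choose d : ℝ) * p ^ d * (1 - p) ^ (n - d) *
          ((u : ℝ) * ((n - u).choose (d - 1) : ℝ) / (n.choose d : ℝ)))
      = (u : ℝ) * p * (1 - p) ^ (u - 1) := by
    have hcongr : ∀ d ∈ Finset.Icc 1 (n - u + 1),
        (n.choose d : ℝ) * p ^ d * (1 - p) ^ (n - d) *
          ((u : ℝ) * ((n - u).choose (d - 1) : ℝ) / (n.choose d : ℝ))
        = (u : ℝ) * p * (1 - p) ^ (u - 1) *
            (((n - u).choose (d - 1) : ℝ) * p ^ (d - 1) * (1 - p) ^ (n - u - (d - 1))) := by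
      intro d hd
      simp only [Finset.mem_Icc] at hd
      obtain ⟨hd1, hdle⟩ := hd
      have hCne : ((n.choose d : ℝ)) ≠ 0 := by
        have : d ≤ n := by omega
        exact_mod_cast (Nat.choose_pos this).ne'
      have hpd : p ^ d = p * p ^ (d - 1) := by
        rw [← pow_succ']; congr 1; omega
      have hqd : (1 - p) ^ (n - d) = (1 - p) ^ (u - 1) * (1 - p) ^ (n - u - (d - 1)) := by
        rw [← pow_add]; congr 1; omega
      rw [hpd, hqd]
      field_simp
    rw [Finset.sum_congr rfl hcongr, ← Finset.mul_sum]
    have hre : ∑ d ∈ Finset.Icc 1 (n - u + 1),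
        (((n - u).choose (d - 1) : ℝ) * p ^ (d - 1) * (1 - p) ^ (n - u - (d - 1)))
        = ∑ k ∈ Finset.range (n - u + 1),
            (((n - u).choose k : ℝ) * p ^ k * (1 - p) ^ (n - u - k)) := by
      rw [show Finset.Icc 1 (n - u + 1) = Finset.Ico 1 (n - u + 2) by
        rw [← Finset.Ico_add_one_right_eq_Icc]; rfl]
      rw [Finset.sum_Ico_eq_sum_range]
      simp only [show n - u + 2 - 1 = n - u + 1 by omega, Nat.add_sub_cancel_left,
        show ∀ k, 1 + k - 1 = k from fun k => by omega]
    rw [hre, binom_one, mul_one]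
  -- Third sum
  have hsum3 : (∑ d ∈ Finset.range (n - u + 1),
        (n.choose d : ℝ) * p ^ d * (1 - p) ^ (n - d) *
          (((n - u).choose d : ℝ) / (n.choose d : ℝ)))
      = (1 - p) ^ u := by
    have hcongr : ∀ d ∈ Finset.range (n - u + 1),
        (n.choose d : ℝ) * p ^ d * (1 - p) ^ (n - d) *
          (((n - u).choose d : ℝ) / (n.choose d : ℝ))
        = (1 - p) ^ u * (((n - u).choose d : ℝ) * p ^ d * (1 - p) ^ (n - u - d)) := by
      intro d hd
      simp only [Finset.mem_range] at hd
      have hCne : ((n.choose d : ℝ)) ≠ 0 := by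
        have : d ≤ n := by omega
        exact_mod_cast (Nat.choose_pos this).ne'
      have hqd : (1 - p) ^ (n - d) = (1 - p) ^ u * (1 - p) ^ (n - u - d) := by
        rw [← pow_add]; congr 1; omega
      rw [hqd]
      field_simp
    rw [Finset.sum_congr rfl hcongr, ← Finset.mul_sum, binom_one, mul_one]
  rw [hnum, hsum2, hsum3]
end
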